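/- Let T1, T2, T3 be the 4×4 matrices with (T1)_{1,3} = (T2)_{1,4} = (T3)_{2,3} = 1 and all other entries zero, and let F be any Hilbert space. Define T_k' = T_k ⊕ 0_F on H = ℂ⁴ ⊕ F for k = 1,2,3. Then (0,0,1/2) and (0,1/2,0) lie in the joint numerical range W(T1',T2',T3'), but (0,1/4,1/4) does not. Hence for every Hilbert space of dimension ≥ 4 there is a commuting triple with non-convex joint numerical range. -/

import Mathlib

/-!
Write `x_i = ⟪e_i, x⟫` for an orthonormal quadruple `e`. The rank-one operators
`e_i ⊗ e_j†` have pairwise vanishing products, hence commute, and their quadratic forms are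
`conj x_i * x_j`. So the joint numerical range of `(e₀ ⊗ e₂†, e₀ ⊗ e₃†, e₁ ⊗ e₂†)` consists of
points `(conj x₀ x₂, conj x₀ x₃, conj x₁ x₂)`. The vectors `(e₁ + e₂)/√2` and `(e₀ + e₃)/√2`
give `(0, 0, 1/2)` and `(0, 1/2, 0)`, but their midpoint `(0, 1/4, 1/4)` is not attained:
`conj x₀ x₃ ≠ 0` forces `x₀ ≠ 0`, then `conj x₀ x₂ = 0` forces `x₂ = 0`, so `conj x₁ x₂ = 0`.
The operators `T_k ⊕ 0` on `ℂ⁴ ⊕ F` are exactly such a triple, for `e_i = (δ_i, 0)`.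
-/

open InnerProductSpace ComplexConjugate

section RCLike
variable {𝕜 : Type*} [RCLike 𝕜]

lemma exists_orthonormal_of_le_rank {V : Type*} [NormedAddCommGroup V] [InnerProductSpace 𝕜 V]
    {n : ℕ} (h : n ≤ Module.rank 𝕜 V) : ∃ e : Fin n → V, Orthonormal 𝕜 e := by
  obtain ⟨s, hcard, hli⟩ := le_rank_iff_exists_linearIndependent_finset.mp h
  let b : Fin n ≃ s := (Fintype.equivFinOfCardEq (by simpa using hcard)).symm
  exact ⟨gramSchmidtNormed 𝕜 ((↑) ∘ b), gramSchmidtNormed_orthonormal (hli.comp b b.injective)⟩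

variable {ι : Type*} [Fintype ι] [DecidableEq ι]

lemma Matrix.toEuclideanLin_single_one_apply (i j : ι) (v : EuclideanSpace 𝕜 ι) :
    Matrix.toEuclideanLin (Matrix.single i j 1) v =
      rankOne 𝕜 (EuclideanSpace.single i 1) (EuclideanSpace.single j 1) v := by
  ext k
  simp [Matrix.toLpLin_apply, Matrix.single_mulVec_eq, EuclideanSpace.inner_single_left]

variable {F : Type*} [NormedAddCommGroup F] [InnerProductSpace 𝕜 F]

lemma orthonormal_toLp_single_zero :
    Orthonormal 𝕜 fun i : ι => WithLp.toLp 2 (EuclideanSpace.single i (1 : 𝕜), (0 : F)) := by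
  rw [orthonormal_iff_ite]
  intro i j
  simp [EuclideanSpace.inner_single_left, eq_comm]

lemma eq_rankOne_of_toEuclideanLin_single
    (S : WithLp 2 (EuclideanSpace 𝕜 ι × F) →L[𝕜] WithLp 2 (EuclideanSpace 𝕜 ι × F)) (i j : ι)
    (hS : ∀ h : WithLp 2 (EuclideanSpace 𝕜 ι × F),
      (S h).fst = Matrix.toEuclideanLin (Matrix.single i j 1) h.fst ∧ (S h).snd = 0) :
    S = rankOne 𝕜 (WithLp.toLp 2 (EuclideanSpace.single i 1, 0))
      (WithLp.toLp 2 (EuclideanSpace.single j 1, 0)) := by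
  ext h : 1
  obtain ⟨h₁, h₂⟩ := hS h
  refine (WithLp.ext_iff 2).mpr (Prod.ext ?_ ?_)
  · simp [h₁, Matrix.toEuclideanLin_single_one_apply]
  · simp [h₂]

end RCLike

section JointNumericalRange
variable {V : Type*} [NormedAddCommGroup V] [InnerProductSpace ℂ V]

def jointNumericalRange (A₁ A₂ A₃ : V →L[ℂ] V) : Set (ℂ × ℂ × ℂ) :=
  {p | ∃ x : V, ‖x‖ = 1 ∧ p = (inner ℂ x (A₁ x), inner ℂ x (A₂ x), inner ℂ x (A₃ x))}

lemma norm_eq_one_of_inner_self_eq_one {x : V} (h : inner ℂ x x = 1) : ‖x‖ = 1 := by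
  rw [norm_eq_sqrt_re_inner (𝕜 := ℂ), h, RCLike.one_re, Real.sqrt_one]

lemma inner_rankOne_apply_self (u v x : V) :
    inner ℂ x (rankOne ℂ u v x) = conj (inner ℂ u x) * inner ℂ v x := by
  rw [inner_right_rankOne_apply, inner_conj_symm]

lemma commute_rankOne_of_inner_eq_zero {u v u' v' : V} (h : inner ℂ v u' = 0)
    (h' : inner ℂ v' u = 0) : Commute (rankOne ℂ u v) (rankOne ℂ u' v') := by
  simp [Commute, SemiconjBy, ContinuousLinearMap.mul_def, rankOne_comp_rankOne, h, h']

def tripleForm (a : Fin 4 → ℂ) : ℂ × ℂ × ℂ :=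
  (conj (a 0) * a 2, conj (a 0) * a 3, conj (a 1) * a 2)

lemma tripleForm_ne (a : Fin 4 → ℂ) : tripleForm a ≠ (0, 1/4, 1/4) := by
  intro h
  simp only [tripleForm, Prod.mk.injEq] at h
  obtain ⟨h₀₂, h₀₃, h₁₂⟩ := h
  have ha₀ : conj (a 0) ≠ 0 := left_ne_zero_of_mul (by rw [h₀₃]; norm_num)
  have ha₂ : a 2 = 0 := (mul_eq_zero.mp h₀₂).resolve_left ha₀
  rw [ha₂, mul_zero] at h₁₂
  norm_num at h₁₂

abbrev rankOneRange (e : Fin 4 → V) : Set (ℂ × ℂ × ℂ) :=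
  jointNumericalRange (rankOne ℂ (e 0) (e 2)) (rankOne ℂ (e 0) (e 3)) (rankOne ℂ (e 1) (e 2))

lemma rankOneRange_subset_range_tripleForm (e : Fin 4 → V) :
    rankOneRange e ⊆ Set.range tripleForm := by
  rintro _ ⟨x, -, rfl⟩
  exact ⟨fun i => inner ℂ (e i) x, by simp only [tripleForm, inner_rankOne_apply_self]⟩

lemma tripleForm_mem_rankOneRange {e : Fin 4 → V} (he : Orthonormal ℂ e) {a : Fin 4 → ℂ}
    (ha : ∑ i, conj (a i) * a i = 1) : tripleForm a ∈ rankOneRange e := by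
  refine ⟨∑ i, a i • e i, norm_eq_one_of_inner_self_eq_one ?_, ?_⟩
  · rw [he.inner_sum, ha]
  · simp only [tripleForm, inner_rankOne_apply_self, he.inner_right_fintype]

lemma mem_rankOneRange {e : Fin 4 → V} (he : Orthonormal ℂ e) :
    ((0, 0, 1/2) : ℂ × ℂ × ℂ) ∈ rankOneRange e ∧ ((0, 1/2, 0) : ℂ × ℂ × ℂ) ∈ rankOneRange e ∧
      ((0, 1/4, 1/4) : ℂ × ℂ × ℂ) ∉ rankOneRange e := by
  obtain ⟨c, hc⟩ : ∃ c : ℂ, conj c * c = 1/2 :=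
    ⟨Real.sqrt (1/2), by
      rw [Complex.conj_ofReal, ← Complex.ofReal_mul, Real.mul_self_sqrt] <;> norm_num⟩
  refine ⟨?_, ?_, fun h => ?_⟩
  · convert tripleForm_mem_rankOneRange he (a := ![0, c, c, 0]) ?_ using 1
    · simp [tripleForm, hc]
    · simpa [Fin.sum_univ_four, hc] using add_halves (1 : ℂ)
  · convert tripleForm_mem_rankOneRange he (a := ![c, 0, 0, c]) ?_ using 1
    · simp [tripleForm, hc]
    · simpa [Fin.sum_univ_four, hc] using add_halves (1 : ℂ)
  · obtain ⟨a, ha⟩ := rankOneRange_subset_range_tripleForm e h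
    exact tripleForm_ne a ha

lemma not_convex_rankOneRange {e : Fin 4 → V} (he : Orthonormal ℂ e) :
    ¬ Convex ℝ (rankOneRange e) := by
  obtain ⟨hp, hq, hmid⟩ := mem_rankOneRange he
  refine fun hconv => hmid ?_
  convert hconv.midpoint_mem hp hq using 1
  norm_num [midpoint, AffineMap.lineMap_apply]

end JointNumericalRange

theorem stmt_19_general {F : Type*} [NormedAddCommGroup F] [InnerProductSpace ℂ F]
    {H : Type*} [NormedAddCommGroup H] [InnerProductSpace ℂ H]
    (hdim : 4 ≤ Module.rank ℂ H)
    (T₁ T₂ T₃ : Matrix (Fin 4) (Fin 4) ℂ)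
    (h₁ : T₁ = Matrix.single 0 2 1)
    (h₂ : T₂ = Matrix.single 0 3 1)
    (h₃ : T₃ = Matrix.single 1 2 1)
    (S₁ S₂ S₃ : WithLp 2 (EuclideanSpace ℂ (Fin 4) × F) →L[ℂ]
        WithLp 2 (EuclideanSpace ℂ (Fin 4) × F))
    (hS₁ : ∀ h : WithLp 2 (EuclideanSpace ℂ (Fin 4) × F),
      (S₁ h).fst = Matrix.toEuclideanLin T₁ h.fst ∧ (S₁ h).snd = 0)
    (hS₂ : ∀ h : WithLp 2 (EuclideanSpace ℂ (Fin 4) × F),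
      (S₂ h).fst = Matrix.toEuclideanLin T₂ h.fst ∧ (S₂ h).snd = 0)
    (hS₃ : ∀ h : WithLp 2 (EuclideanSpace ℂ (Fin 4) × F),
      (S₃ h).fst = Matrix.toEuclideanLin T₃ h.fst ∧ (S₃ h).snd = 0)
    (W' : Set (ℂ × ℂ × ℂ))
    (hW' : W' = {p : ℂ × ℂ × ℂ | ∃ h : WithLp 2 (EuclideanSpace ℂ (Fin 4) × F), ‖h‖ = 1 ∧
      p = ((inner ℂ h (S₁ h) : ℂ), (inner ℂ h (S₂ h) : ℂ), (inner ℂ h (S₃ h) : ℂ))}) :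
    (((0, 0, 1/2) : ℂ × ℂ × ℂ) ∈ W' ∧ ((0, 1/2, 0) : ℂ × ℂ × ℂ) ∈ W' ∧
      ((0, 1/4, 1/4) : ℂ × ℂ × ℂ) ∉ W') ∧
    ∃ A₁ A₂ A₃ : H →L[ℂ] H, Commute A₁ A₂ ∧ Commute A₁ A₃ ∧ Commute A₂ A₃ ∧
      ¬ Convex ℝ {p : ℂ × ℂ × ℂ | ∃ x : H, ‖x‖ = 1 ∧
          p = ((inner ℂ x (A₁ x) : ℂ), (inner ℂ x (A₂ x) : ℂ), (inner ℂ x (A₃ x) : ℂ))} := by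
  subst h₁ h₂ h₃ hW'
  obtain rfl := eq_rankOne_of_toEuclideanLin_single S₁ 0 2 hS₁
  obtain rfl := eq_rankOne_of_toEuclideanLin_single S₂ 0 3 hS₂
  obtain rfl := eq_rankOne_of_toEuclideanLin_single S₃ 1 2 hS₃
  refine ⟨mem_rankOneRange (e := fun i => WithLp.toLp 2 (EuclideanSpace.single i 1, 0))
    orthonormal_toLp_single_zero, ?_⟩
  obtain ⟨e, he⟩ := exists_orthonormal_of_le_rank (n := 4) hdim
  have horth {i j : Fin 4} (hij : i ≠ j) : inner ℂ (e i) (e j) = 0 := he.inner_eq_zero hij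
  exact ⟨_, _, _, commute_rankOne_of_inner_eq_zero (horth (by decide)) (horth (by decide)),
    commute_rankOne_of_inner_eq_zero (horth (by decide)) (horth (by decide)),
    commute_rankOne_of_inner_eq_zero (horth (by decide)) (horth (by decide)),
    not_convex_rankOneRange he⟩

/-- The commuting triple `T₁,T₂,T₃` on `ℂ⁴`, extended by `0` to `ℂ⁴ ⊕ F`, has joint numerical
range containing `(0,0,1/2)` and `(0,1/2,0)` but not `(0,1/4,1/4)`; hence every Hilbert space
`H` of dimension `≥ 4` carries a commuting triple with non-convex joint numerical range. -/
theorem stmt_19 {F : Type*} [NormedAddCommGroup F] [InnerProductSpace ℂ F]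
    {H : Type*} [NormedAddCommGroup H] [InnerProductSpace ℂ H] [CompleteSpace H]
    (hdim : 4 ≤ Module.rank ℂ H)
    (T₁ T₂ T₃ : Matrix (Fin 4) (Fin 4) ℂ)
    (h₁ : T₁ = Matrix.single 0 2 1)
    (h₂ : T₂ = Matrix.single 0 3 1)
    (h₃ : T₃ = Matrix.single 1 2 1)
    (S₁ S₂ S₃ : WithLp 2 (EuclideanSpace ℂ (Fin 4) × F) →L[ℂ]
        WithLp 2 (EuclideanSpace ℂ (Fin 4) × F))
    (hS₁ : ∀ h : WithLp 2 (EuclideanSpace ℂ (Fin 4) × F),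
      (S₁ h).fst = Matrix.toEuclideanLin T₁ h.fst ∧ (S₁ h).snd = 0)
    (hS₂ : ∀ h : WithLp 2 (EuclideanSpace ℂ (Fin 4) × F),
      (S₂ h).fst = Matrix.toEuclideanLin T₂ h.fst ∧ (S₂ h).snd = 0)
    (hS₃ : ∀ h : WithLp 2 (EuclideanSpace ℂ (Fin 4) × F),
      (S₃ h).fst = Matrix.toEuclideanLin T₃ h.fst ∧ (S₃ h).snd = 0)
    (W' : Set (ℂ × ℂ × ℂ))
    (hW' : W' = {p : ℂ × ℂ × ℂ | ∃ h : WithLp 2 (EuclideanSpace ℂ (Fin 4) × F), ‖h‖ = 1 ∧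
      p = ((inner ℂ h (S₁ h) : ℂ), (inner ℂ h (S₂ h) : ℂ), (inner ℂ h (S₃ h) : ℂ))}) :
    (((0, 0, 1/2) : ℂ × ℂ × ℂ) ∈ W' ∧ ((0, 1/2, 0) : ℂ × ℂ × ℂ) ∈ W' ∧
      ((0, 1/4, 1/4) : ℂ × ℂ × ℂ) ∉ W') ∧
    ∃ A₁ A₂ A₃ : H →L[ℂ] H, Commute A₁ A₂ ∧ Commute A₁ A₃ ∧ Commute A₂ A₃ ∧
      ¬ Convex ℝ {p : ℂ × ℂ × ℂ | ∃ x : H, ‖x‖ = 1 ∧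
          p = ((inner ℂ x (A₁ x) : ℂ), (inner ℂ x (A₂ x) : ℂ), (inner ℂ x (A₃ x) : ℂ))} :=
  stmt_19_general hdim T₁ T₂ T₃ h₁ h₂ h₃ S₁ S₂ S₃ hS₁ hS₂ hS₃ W' hW'
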